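/- arXiv:1703.02373 — 3 statements merged into one kernel-verified Lean document; each statement's English description precedes it below -/
import Mathlib

section
/- Let q : [0,1] → ℝ be nonnegative, differentiable and single-barrier with transition point x₀ ∈ [0,1], with |q'(x)| ≤ (2/15)·min{q(0), q(1)} for all x ∈ [0,1]. Let 1 ≤ m < n be integers and let z_m, z_n > 0 satisfy φ_q(1, z_m) = mπ, φ_q(1, z_n) = nπ, z_n > z_m and z_m² ≥ 11·q(x₀). If equality z_n²/z_m² = n²/m² holds, then q ≡ 0 on [0,1]. -/
/-!
If `min (q 0) (q 1) ≤ 0`, the bound on `q'` forces `q' = 0`, so `q` is a constant that is both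
`≥ 0` and `≤ 0`. Otherwise `q ≥ c₀ := min (q 0) (q 1) > 0` on `[0,1]`, and the eigenvalue ratio
cannot be `n²/m²`. Passing from the Prüfer angle `φ` to the angle `θ` with `tan θ = ρ tan φ`,
`ρ = √(z² - q)/z`, gives an angle that agrees with `φ` at the zeros of `sin φ` and grows at the
local frequency `√(z² - q)` up to an error of at most `|q'| / (4 (z² - q))`. Hence `kπ` equals
`∫₀¹ √(z_k² - q)` up to `11 c₀ / (300 z_m²)` for `k = m, n`. If `z_n / z_m = n / m`, the bound
`√(A - u) - √(A - v) ≥ (v - u) / (2 √A)` gives `m ∫ √(z_n² - q) - n ∫ √(z_m² - q) ≥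
(n² - m²) c₀ / (2 n z_m)`, which exceeds the accumulated error `(m + n) · 11 c₀ / (300 z_m²)`
because `z_m ≥ 3 m`.
-/

open Real Set

theorem le_of_monotoneOn_of_antitoneOn {α β : Type*} [LinearOrder α] [Preorder β] {f : α → β}
    {a b x₀ x : α} (hmono : MonotoneOn f (Icc a x₀)) (hanti : AntitoneOn f (Icc x₀ b))
    (hx₀ : x₀ ∈ Icc a b) (hx : x ∈ Icc a b) : f x ≤ f x₀ := by
  rcases le_total x x₀ with h | h
  · exact hmono ⟨hx.1, h⟩ ⟨hx₀.1, le_rfl⟩ h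
  · exact hanti ⟨le_rfl, hx₀.2⟩ ⟨h, hx.2⟩ h

theorem min_le_of_monotoneOn_of_antitoneOn {α β : Type*} [LinearOrder α] [LinearOrder β]
    {f : α → β} {a b x₀ x : α} (hmono : MonotoneOn f (Icc a x₀)) (hanti : AntitoneOn f (Icc x₀ b))
    (hx₀ : x₀ ∈ Icc a b) (hx : x ∈ Icc a b) : min (f a) (f b) ≤ f x := by
  rcases le_total x x₀ with h | h
  · exact (min_le_left _ _).trans (hmono ⟨le_rfl, hx₀.1⟩ ⟨hx.1, h⟩ hx.1)
  · exact (min_le_right _ _).trans (hanti ⟨h, hx.2⟩ ⟨hx₀.2, le_rfl⟩ hx.2)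

theorem eq_zero_of_abs_deriv_le_mul_min {f f' : ℝ → ℝ} {a b K : ℝ}
    (hf : ∀ x ∈ Icc a b, HasDerivAt f (f' x) x) (hf0 : ∀ x ∈ Icc a b, 0 ≤ f x) (hK : 0 ≤ K)
    (hf' : ∀ x ∈ Icc a b, |f' x| ≤ K * min (f a) (f b)) (hmin : min (f a) (f b) ≤ 0) :
    ∀ x ∈ Icc a b, f x = 0 := by
  intro x hx
  have hab : a ≤ b := hx.1.trans hx.2
  have hf'0 : ∀ y ∈ Icc a b, f' y = 0 := fun y hy =>
    abs_nonpos_iff.1 ((hf' y hy).trans (mul_nonpos_of_nonneg_of_nonpos hK hmin))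
  have hconst := constant_of_has_deriv_right_zero
    (fun y hy => (hf y hy).continuousAt.continuousWithinAt)
    (fun y hy => hf'0 y (Ico_subset_Icc_self hy) ▸ (hf y (Ico_subset_Icc_self hy)).hasDerivWithinAt)
  rw [hconst b (right_mem_Icc.2 hab), min_self] at hmin
  rw [hconst x hx]
  exact le_antisymm hmin (hf0 a (left_mem_Icc.2 hab))

lemma cos_sq_add_mul_sin_sq_pos {r : ℝ} (hr : 0 < r) (t : ℝ) : 0 < cos t ^ 2 + r * sin t ^ 2 := by
  rcases eq_or_ne (sin t) 0 with h | h
  · nlinarith [cos_sq_add_sin_sq t]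
  · positivity

lemma abs_mul_sin_mul_cos_div_le {r : ℝ} (hr : 0 < r) (d t : ℝ) :
    |d * (sin t * cos t) / (cos t ^ 2 + r ^ 2 * sin t ^ 2)| ≤ |d| / (2 * r) := by
  have hE := cos_sq_add_mul_sin_sq_pos (pow_pos hr 2) t
  have hamgm : 2 * r * |sin t * cos t| ≤ cos t ^ 2 + r ^ 2 * sin t ^ 2 := by
    have := two_mul_le_add_sq (r * |sin t|) (|cos t|)
    rw [mul_pow, sq_abs, sq_abs] at this
    rw [abs_mul]
    linarith
  rw [abs_div, abs_mul, abs_of_pos hE, div_le_div_iff₀ hE (by positivity)]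
  calc |d| * |sin t * cos t| * (2 * r) = |d| * (2 * r * |sin t * cos t|) := by ring
    _ ≤ |d| * (cos t ^ 2 + r ^ 2 * sin t ^ 2) := by gcongr

/-- The angle `θ` with `tan θ = ρ tan φ` that agrees with `φ` at the zeros of `sin φ`. -/
noncomputable def rescaledAngle (ρ φ : ℝ → ℝ) (x : ℝ) : ℝ :=
  φ x - arctan ((1 - ρ x) * (sin (φ x) * cos (φ x)) / (cos (φ x) ^ 2 + ρ x * sin (φ x) ^ 2))

lemma rescaledAngle_eq_of_sin_eq_zero {ρ φ : ℝ → ℝ} {x : ℝ} (h : sin (φ x) = 0) :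
    rescaledAngle ρ φ x = φ x := by
  simp [rescaledAngle, h]

theorem hasDerivAt_rescaledAngle {ρ φ : ℝ → ℝ} {ρ' φ' x : ℝ} (hρ : HasDerivAt ρ ρ' x)
    (hφ : HasDerivAt φ φ' x) (hρx : 0 < ρ x) :
    HasDerivAt (rescaledAngle ρ φ)
      ((ρ x * φ' + ρ' * (sin (φ x) * cos (φ x))) / (cos (φ x) ^ 2 + ρ x ^ 2 * sin (φ x) ^ 2)) x := by
  have hs := (hasDerivAt_sin (φ x)).comp x hφ
  have hc := (hasDerivAt_cos (φ x)).comp x hφ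
  have hN := ((hasDerivAt_const x (1 : ℝ)).fun_sub hρ).fun_mul (hs.fun_mul hc)
  have hD := (hc.fun_pow 2).fun_add (hρ.fun_mul (hs.fun_pow 2))
  have hD0 : 0 < cos (φ x) ^ 2 + ρ x * sin (φ x) ^ 2 := cos_sq_add_mul_sin_sq_pos hρx (φ x)
  refine (hφ.fun_sub (hN.fun_div hD hD0.ne').arctan).congr_deriv ?_
  have hE : 0 < cos (φ x) ^ 2 + ρ x ^ 2 * sin (φ x) ^ 2 :=
    cos_sq_add_mul_sin_sq_pos (by positivity) (φ x)
  have hsc : sin (φ x) ^ 2 + cos (φ x) ^ 2 = 1 := sin_sq_add_cos_sq (φ x)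
  simp only [Function.comp_apply]
  generalize sin (φ x) = s at *
  generalize cos (φ x) = c at *
  generalize ρ x = r at *
  field_simp
  push_cast
  linear_combination (s ^ 2 + c ^ 2) * (c ^ 2 + r ^ 2 * s ^ 2) * r * φ' * hsc

theorem hasDerivAt_rescaledAngle_of_prufer {ρ φ q : ℝ → ℝ} {ρ' z x : ℝ} (hz : z ≠ 0)
    (hρ : HasDerivAt ρ ρ' x) (hρx : 0 < ρ x) (hρq : (z * ρ x) ^ 2 = z ^ 2 - q x)
    (hφ : HasDerivAt φ (z - q x / z * sin (φ x) ^ 2) x) :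
    HasDerivAt (rescaledAngle ρ φ) (z * ρ x +
      ρ' * (sin (φ x) * cos (φ x)) / (cos (φ x) ^ 2 + ρ x ^ 2 * sin (φ x) ^ 2)) x := by
  refine (hasDerivAt_rescaledAngle hρ hφ hρx).congr_deriv ?_
  have hE := cos_sq_add_mul_sin_sq_pos (pow_pos hρx 2) (φ x)
  have hsc : sin (φ x) ^ 2 + cos (φ x) ^ 2 = 1 := sin_sq_add_cos_sq (φ x)
  field_simp
  linear_combination (-(ρ x * sin (φ x) ^ 2)) * hρq - ρ x * z ^ 2 * hsc

theorem ContinuousOn.hasDerivWithinAt_integral_Icc {E : Type*} [NormedAddCommGroup E]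
    [NormedSpace ℝ E] [CompleteSpace E] {f : ℝ → E} {a b x : ℝ} (hf : ContinuousOn f (Icc a b))
    (hx : x ∈ Icc a b) : HasDerivWithinAt (fun u => ∫ t in a..u, f t) (f x) (Icc a b) x := by
  have := Fact.mk hx
  exact intervalIntegral.integral_hasDerivWithinAt_right
    ((hf.mono (Icc_subset_Icc le_rfl hx.2)).intervalIntegrable_of_Icc hx.1)
    (hf.stronglyMeasurableAtFilter_nhdsWithin measurableSet_Icc x) (hf x hx)

theorem abs_sub_sub_integral_sqrt_le {q q' φ : ℝ → ℝ} {z a b C : ℝ} (hz : 0 < z) (hab : a ≤ b)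
    (hq : ∀ x ∈ Icc a b, HasDerivAt q (q' x) x) (hqz : ∀ x ∈ Icc a b, q x < z ^ 2)
    (hφ : ∀ x ∈ Icc a b, HasDerivAt φ (z - q x / z * sin (φ x) ^ 2) x)
    (ha : sin (φ a) = 0) (hb : sin (φ b) = 0)
    (hC : ∀ x ∈ Icc a b, |q' x| / (4 * (z ^ 2 - q x)) ≤ C) :
    |φ b - φ a - ∫ x in a..b, √(z ^ 2 - q x)| ≤ C * (b - a) := by
  set ρ : ℝ → ℝ := fun y => √(z ^ 2 - q y) / z
  set ρ' : ℝ → ℝ := fun x => -q' x / (2 * √(z ^ 2 - q x)) / z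
  have hsqrt_pos : ∀ x ∈ Icc a b, 0 < √(z ^ 2 - q x) := fun x hx =>
    sqrt_pos.2 (sub_pos.2 (hqz x hx))
  have hcont : ContinuousOn (fun t => √(z ^ 2 - q t)) (Icc a b) := fun x hx =>
    (continuousAt_const.sub (hq x hx).continuousAt).sqrt.continuousWithinAt
  have hderiv : ∀ x ∈ Icc a b, HasDerivWithinAt
      (fun y => rescaledAngle ρ φ y - ∫ t in a..y, √(z ^ 2 - q t))
      (ρ' x * (sin (φ x) * cos (φ x)) / (cos (φ x) ^ 2 + ρ x ^ 2 * sin (φ x) ^ 2)) (Icc a b) x := by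
    intro x hx
    have hρ : HasDerivAt ρ (ρ' x) x :=
      (((hq x hx).const_sub _).sqrt (sub_pos.2 (hqz x hx)).ne').div_const z
    have hρq : (z * ρ x) ^ 2 = z ^ 2 - q x := by
      rw [mul_div_cancel₀ _ hz.ne', sq_sqrt (sub_pos.2 (hqz x hx)).le]
    have := (hasDerivAt_rescaledAngle_of_prufer hz.ne' hρ (div_pos (hsqrt_pos x hx) hz) hρq
      (hφ x hx)).hasDerivWithinAt.sub (hcont.hasDerivWithinAt_integral_Icc hx)
    rwa [mul_div_cancel₀ _ hz.ne', add_sub_cancel_left] at this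
  have hbound : ∀ x ∈ Icc a b,
      ‖ρ' x * (sin (φ x) * cos (φ x)) / (cos (φ x) ^ 2 + ρ x ^ 2 * sin (φ x) ^ 2)‖ ≤ C := by
    intro x hx
    have hk := hsqrt_pos x hx
    calc _ ≤ |ρ' x| / (2 * ρ x) := abs_mul_sin_mul_cos_div_le (div_pos hk hz) _ _
      _ = |q' x| / (4 * (z ^ 2 - q x)) := by
        rw [← sq_sqrt (sub_pos.2 (hqz x hx)).le]
        simp only [ρ, ρ', abs_div, abs_neg, abs_of_pos hz, abs_of_pos hk, abs_two, abs_mul]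
        field_simp
        ring
      _ ≤ C := hC x hx
  have hmvt := (convex_Icc a b).norm_image_sub_le_of_norm_hasDerivWithin_le hderiv hbound
    (left_mem_Icc.2 hab) (right_mem_Icc.2 hab)
  simpa [rescaledAngle_eq_of_sin_eq_zero ha, rescaledAngle_eq_of_sin_eq_zero hb,
    abs_of_nonneg (sub_nonneg.2 hab), sub_right_comm] using hmvt

theorem abs_mul_pi_sub_integral_sqrt_le {q q' φ : ℝ → ℝ} {c Q w z : ℝ} {k : ℕ} (hw : 0 < w)
    (hwz : w ≤ z) (hQ : 11 * Q ≤ w ^ 2) (hq : ∀ x ∈ Icc (0 : ℝ) 1, HasDerivAt q (q' x) x)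
    (hqQ : ∀ x ∈ Icc (0 : ℝ) 1, q x ≤ Q) (hq' : ∀ x ∈ Icc (0 : ℝ) 1, |q' x| ≤ 2 / 15 * c)
    (hφ : ∀ x ∈ Icc (0 : ℝ) 1, HasDerivAt φ (z - q x / z * sin (φ x) ^ 2) x)
    (hφ0 : φ 0 = 0) (hφ1 : φ 1 = k * π) :
    |k * π - ∫ x in (0 : ℝ)..1, √(z ^ 2 - q x)| ≤ 11 * c / (300 * w ^ 2) := by
  have hwz2 : w ^ 2 ≤ z ^ 2 := pow_le_pow_left₀ hw.le hwz 2
  have hgap : ∀ x ∈ Icc (0 : ℝ) 1, 40 * w ^ 2 / 11 ≤ 4 * (z ^ 2 - q x) := fun x hx => by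
    linarith [hqQ x hx]
  have := abs_sub_sub_integral_sqrt_le (hw.trans_le hwz) zero_le_one hq
    (fun x hx => by nlinarith [hgap x hx]) hφ (by rw [hφ0, sin_zero]) (by rw [hφ1, sin_nat_mul_pi])
    (C := 11 * c / (300 * w ^ 2)) fun x hx => by
      calc |q' x| / (4 * (z ^ 2 - q x)) ≤ |q' x| / (40 * w ^ 2 / 11) :=
            div_le_div_of_nonneg_left (abs_nonneg _) (by positivity) (hgap x hx)
        _ ≤ 2 / 15 * c / (40 * w ^ 2 / 11) := by gcongr; exact hq' x hx
        _ = 11 * c / (300 * w ^ 2) := by field_simp; ring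
  simpa [hφ0, hφ1] using this

theorem integral_sqrt_sq_sub_le {q : ℝ → ℝ} {a b z : ℝ} (hab : a ≤ b) (hz : 0 ≤ z)
    (hq : ∀ x ∈ Icc a b, 0 ≤ q x) : ∫ x in a..b, √(z ^ 2 - q x) ≤ z * (b - a) := by
  have hbound := intervalIntegral.norm_integral_le_of_norm_le_const
    (f := fun x => √(z ^ 2 - q x)) (C := z) fun x hx => by
      rw [uIoc_of_le hab] at hx
      rw [norm_of_nonneg (sqrt_nonneg _), sqrt_le_left hz]
      linarith [hq x (Ioc_subset_Icc_self hx)]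
  rw [norm_eq_abs, abs_of_nonneg (sub_nonneg.2 hab)] at hbound
  exact (le_abs_self _).trans hbound

theorem div_two_sqrt_le_sqrt_sub_sub_sqrt_sub {A u v : ℝ} (hA : 0 < A) (hu : 0 ≤ u) (huv : u ≤ v)
    (hvA : v ≤ A) : (v - u) / (2 * √A) ≤ √(A - u) - √(A - v) := by
  have hsu : √(A - u) ^ 2 = A - u := sq_sqrt (by linarith)
  have hsv : √(A - v) ^ 2 = A - v := sq_sqrt (by linarith)
  have hu_le : √(A - u) ≤ √A := sqrt_le_sqrt (by linarith)
  have hv_le : √(A - v) ≤ √(A - u) := sqrt_le_sqrt (by linarith)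
  rw [div_le_iff₀ (by positivity)]
  nlinarith [sqrt_nonneg (A - v)]

theorem integral_sqrt_gap {q : ℝ → ℝ} {a b c m n zm zn : ℝ} (hab : a ≤ b) (hm : 0 < m)
    (hmn : m ≤ n) (hzm : 0 < zm) (hratio : m * zn = n * zm) (hq : ContinuousOn q (Icc a b))
    (hcq : ∀ x ∈ Icc a b, c ≤ q x) (hq0 : ∀ x ∈ Icc a b, 0 ≤ q x)
    (hqz : ∀ x ∈ Icc a b, q x ≤ zm ^ 2) :
    (n ^ 2 - m ^ 2) * c / (2 * n * zm) * (b - a) ≤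
      m * (∫ x in a..b, √(zn ^ 2 - q x)) - n * ∫ x in a..b, √(zm ^ 2 - q x) := by
  have hn : 0 < n := hm.trans_le hmn
  have hpoint : ∀ x ∈ Icc a b, (n ^ 2 - m ^ 2) * c / (2 * n * zm) ≤
      m * √(zn ^ 2 - q x) - n * √(zm ^ 2 - q x) := by
    intro x hx
    have hA : √((n * zm) ^ 2) = n * zm := sqrt_sq (by positivity)
    have hsqrt_mul : ∀ {r : ℝ}, 0 ≤ r → ∀ y, r * √y = √(r ^ 2 * y) := fun hr y => by
      rw [sqrt_mul (by positivity), sqrt_sq hr]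
    calc (n ^ 2 - m ^ 2) * c / (2 * n * zm)
        ≤ (n ^ 2 * q x - m ^ 2 * q x) / (2 * √((n * zm) ^ 2)) := by
          rw [hA, ← sub_mul, ← mul_assoc]
          have : 0 ≤ n ^ 2 - m ^ 2 := by nlinarith
          gcongr
          exact hcq x hx
      _ ≤ √((n * zm) ^ 2 - m ^ 2 * q x) - √((n * zm) ^ 2 - n ^ 2 * q x) :=
          div_two_sqrt_le_sqrt_sub_sub_sqrt_sub (by positivity) (by have := hq0 x hx; positivity)
            (by have := hq0 x hx; gcongr) (by rw [mul_pow]; have := hqz x hx; gcongr)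
      _ = m * √(zn ^ 2 - q x) - n * √(zm ^ 2 - q x) := by
          rw [hsqrt_mul hm.le, hsqrt_mul hn.le]
          congr 2
          · linear_combination (-(n * zm + m * zn)) * hratio
          · ring
  have hint : ∀ z, IntervalIntegrable (fun x => √(z ^ 2 - q x)) MeasureTheory.volume a b :=
    fun z => ((continuousOn_const.sub hq).sqrt).intervalIntegrable_of_Icc hab
  have := intervalIntegral.integral_mono_on hab intervalIntegrable_const
    (((hint zn).const_mul m).sub ((hint zm).const_mul n)) hpoint
  rwa [intervalIntegral.integral_const, intervalIntegral.integral_sub ((hint zn).const_mul m)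
    ((hint zm).const_mul n), intervalIntegral.integral_const_mul,
    intervalIntegral.integral_const_mul, smul_eq_mul, mul_comm (b - a)] at this

theorem false_of_integral_sqrt_gap {m n z c I J : ℝ} (hm : 1 ≤ m) (hmn : m + 1 ≤ n) (hz : 0 < z)
    (hc : 0 < c) (hcz : 11 * c ≤ z ^ 2) (hIz : I ≤ z)
    (hI : |m * π - I| ≤ 11 * c / (300 * z ^ 2)) (hJ : |n * π - J| ≤ 11 * c / (300 * z ^ 2))
    (hgap : (n ^ 2 - m ^ 2) * c / (2 * n * z) ≤ m * J - n * I) : False := by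
  set B := 11 * c / (300 * z ^ 2)
  have hB : 300 * B ≤ 1 := by
    rw [← mul_div_assoc, div_le_one (by positivity)]
    nlinarith
  have hz3m : 3 * m ≤ z := by
    nlinarith [(abs_le.1 hI).2, pi_gt_d2]
  have hgapB : (n ^ 2 - m ^ 2) * c / (2 * n * z) ≤ (m + n) * B := by
    have := mul_le_mul_of_nonneg_left (abs_le.1 hJ).1 (by linarith : (0 : ℝ) ≤ m)
    have := mul_le_mul_of_nonneg_left (abs_le.1 hI).2 (by linarith : (0 : ℝ) ≤ n)
    linarith
  have hn : 0 < n := by linarith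
  have hcleared : 150 * (n - m) * z ≤ 11 * n := by
    rw [div_le_iff₀ (by positivity), mul_div_assoc', div_mul_eq_mul_div,
      le_div_iff₀ (by positivity)] at hgapB
    refine le_of_mul_le_mul_left ?_ (by positivity : 0 < 2 * (n + m) * c * z)
    linarith
  nlinarith [mul_le_mul_of_nonneg_left hz3m (by linarith : (0 : ℝ) ≤ 150 * (n - m))]

/-- Equality λₙ/λₘ = n²/m² forces q ≡ 0 on [0,1]. -/
theorem ratio_equality_implies_zero_potential
    (q q' : ℝ → ℝ) (x₀ : ℝ) (hx₀ : x₀ ∈ Icc (0:ℝ) 1)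
    (hqnonneg : ∀ x ∈ Icc (0:ℝ) 1, 0 ≤ q x)
    (hqdiff : ∀ x ∈ Icc (0:ℝ) 1, HasDerivAt q (q' x) x)
    (hmono : MonotoneOn q (Icc 0 x₀))
    (hanti : AntitoneOn q (Icc x₀ 1))
    (hq'bound : ∀ x ∈ Icc (0:ℝ) 1, |q' x| ≤ (2/15) * min (q 0) (q 1))
    (m n : ℕ) (hm : 1 ≤ m) (hmn : m < n)
    (zm zn : ℝ) (hzm : 0 < zm) (hzn : 0 < zn)
    (φm φn : ℝ → ℝ)
    (hφm0 : φm 0 = 0)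
    (hφmODE : ∀ x ∈ Icc (0:ℝ) 1,
      HasDerivAt φm (zm - q x / zm * Real.sin (φm x) ^ 2) x)
    (hφm1 : φm 1 = m * π)
    (hφn0 : φn 0 = 0)
    (hφnODE : ∀ x ∈ Icc (0:ℝ) 1,
      HasDerivAt φn (zn - q x / zn * Real.sin (φn x) ^ 2) x)
    (hφn1 : φn 1 = n * π)
    (hgt : zm < zn) (hlam : 11 * q x₀ ≤ zm ^ 2)
    (heq : zn ^ 2 / zm ^ 2 = (n : ℝ) ^ 2 / (m : ℝ) ^ 2) :
    ∀ x ∈ Icc (0:ℝ) 1, q x = 0 := by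
  rcases le_or_gt (min (q 0) (q 1)) 0 with hmin | hmin
  · exact eq_zero_of_abs_deriv_le_mul_min hqdiff hqnonneg (by norm_num) hq'bound hmin
  exfalso
  have hq_le x (hx : x ∈ Icc (0 : ℝ) 1) : q x ≤ q x₀ :=
    le_of_monotoneOn_of_antitoneOn hmono hanti hx₀ hx
  have hq_ge x (hx : x ∈ Icc (0 : ℝ) 1) : min (q 0) (q 1) ≤ q x :=
    min_le_of_monotoneOn_of_antitoneOn hmono hanti hx₀ hx
  have hm1 : (1 : ℝ) ≤ m := by exact_mod_cast hm
  have hratio : (m : ℝ) * zn = n * zm := by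
    rw [div_eq_div_iff (by positivity) (by positivity)] at heq
    exact (pow_left_inj₀ (by positivity) (by positivity) two_ne_zero).1 (by linear_combination heq)
  have hI := abs_mul_pi_sub_integral_sqrt_le hzm le_rfl hlam hqdiff hq_le hq'bound hφmODE hφm0 hφm1
  have hJ := abs_mul_pi_sub_integral_sqrt_le hzm hgt.le hlam hqdiff hq_le hq'bound hφnODE hφn0 hφn1
  have hIz := integral_sqrt_sq_sub_le zero_le_one hzm.le hqnonneg
  have hgap := integral_sqrt_gap zero_le_one (by positivity) (by exact_mod_cast hmn.le) hzm hratio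
    (fun x hx => (hqdiff x hx).continuousAt.continuousWithinAt) hq_ge hqnonneg
    (fun x hx => by linarith [hq_le x hx, hqnonneg x₀ hx₀])
  exact false_of_integral_sqrt_gap hm1 (by exact_mod_cast hmn) hzm hmin
    (by linarith [hq_ge x₀ hx₀]) (by simpa using hIz) hI hJ (by simpa using hgap)
end

section
/- Let q : [0,1] → ℝ be continuous and nonnegative, and let φ : [0,1] × (0,∞) → ℝ be continuously differentiable such that for every z > 0 the function φ(·,z) is the Prüfer angle of q at z, i.e. ∂φ/∂x (x,z) = z − (q(x)/z)·sin²(φ(x,z)) and φ(0,z) = 0. Let r(x,z) = exp(∫₀ˣ (q(t)/z)·sin(φ(t,z))·cos(φ(t,z)) dt). Then for every x ∈ [0,1] and z > 0, the derivative with respect to z of the scaled angle θ(x,z) = φ(x,z)/z equals (2/(z²·r(x,z)²)) · ∫₀ˣ r(t,z)² · (q(t)/z) · (sin²(φ(t,z)) − φ(t,z)·sin(φ(t,z))·cos(φ(t,z))) dt. -/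
/-!
Differentiating the integral form of the Prüfer equation under the integral sign shows that
`ψ = ∂φ/∂z` solves the variational equation `ψ' = 1 + (q/z²) sin²φ - 2 (q/z) sinφ cosφ ψ`,
`ψ(0) = 0`. Hence `u = ψ - φ/z = z ∂θ/∂z` solves the linear equation
`u' = -2 (q/z) sinφ cosφ u + (2q/z²)(sin²φ - φ sinφ cosφ)`, `u(0) = 0`, whose integrating factor
`exp (2 ∫₀ˣ (q/z) sinφ cosφ)` is exactly `r²`.
-/

open Real Set Filter Topology MeasureTheory

theorem ContDiffOn.exists_continuousOn_hasDerivAt_snd {f : ℝ → ℝ → ℝ} {s t : Set ℝ}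
    (hs : UniqueDiffOn ℝ s) (ht : IsOpen t)
    (hf : ContDiffOn ℝ 1 (fun p : ℝ × ℝ => f p.1 p.2) (s ×ˢ t)) :
    ∃ g : ℝ → ℝ → ℝ, ContinuousOn (fun p : ℝ × ℝ => g p.1 p.2) (s ×ˢ t) ∧
      ∀ x ∈ s, ∀ w ∈ t, HasDerivAt (f x) (g x w) w := by
  refine ⟨fun x w => fderivWithin ℝ (fun p : ℝ × ℝ => f p.1 p.2) (s ×ˢ t) (x, w) (0, 1),
    (hf.continuousOn_fderivWithin (hs.prod ht.uniqueDiffOn) le_rfl).clm_apply continuousOn_const,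
    fun x hx w hw => ?_⟩
  have hfx : HasFDerivWithinAt (fun p : ℝ × ℝ => f p.1 p.2)
      (fderivWithin ℝ (fun p : ℝ × ℝ => f p.1 p.2) (s ×ˢ t) (x, w)) (s ×ˢ t) (x, w) :=
    (hf.differentiableOn one_ne_zero (x, w) ⟨hx, hw⟩).hasFDerivWithinAt
  have hslice : HasDerivWithinAt (fun v : ℝ => (x, v)) (0, 1) t w :=
    ((hasDerivAt_const w x).prodMk (hasDerivAt_id w)).hasDerivWithinAt
  exact (hfx.comp_hasDerivWithinAt w hslice fun v hv => ⟨hx, hv⟩).hasDerivAt (ht.mem_nhds hw)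

theorem ContinuousOn.integral_hasDerivAt_right_of_mem_Ioo {f : ℝ → ℝ} {a b s : ℝ}
    (hf : ContinuousOn f (Icc a b)) (hs : s ∈ Ioo a b) :
    HasDerivAt (fun u => ∫ t in a..u, f t) (f s) s :=
  intervalIntegral.integral_hasDerivAt_right
    ((hf.mono (Icc_subset_Icc_right hs.2.le)).intervalIntegrable_of_Icc hs.1.le)
    ((hf.mono Ioo_subset_Icc_self).stronglyMeasurableAtFilter isOpen_Ioo s hs)
    (hf.continuousAt (Icc_mem_nhds hs.1 hs.2))

theorem exp_integral_mul_sub_eq_integral_of_hasDerivAt {p k u : ℝ → ℝ} {a b : ℝ} (hab : a ≤ b)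
    (hp : ContinuousOn p (Icc a b)) (hk : ContinuousOn k (Icc a b))
    (hu : ContinuousOn u (Icc a b)) (hu' : ∀ s ∈ Ioo a b, HasDerivAt u (k s - p s * u s) s) :
    exp (∫ t in a..b, p t) * u b - u a = ∫ t in a..b, exp (∫ r in a..t, p r) * k t := by
  have hP : ContinuousOn (fun t => exp (∫ r in a..t, p r)) (Icc a b) := by
    have hint : IntegrableOn p (uIcc a b) volume := by
      rw [uIcc_of_le hab]; exact hp.integrableOn_Icc
    have := intervalIntegral.continuousOn_primitive_interval hint
    rw [uIcc_of_le hab] at this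
    exact continuous_exp.comp_continuousOn this
  have hderiv : ∀ s ∈ Ioo a b, HasDerivAt (fun t => exp (∫ r in a..t, p r) * u t)
      (exp (∫ r in a..s, p r) * k s) s := by
    intro s hs
    exact (((hp.integral_hasDerivAt_right_of_mem_Ioo hs).exp).mul (hu' s hs)).congr_deriv
      (by ring)
  rw [intervalIntegral.integral_eq_sub_of_hasDerivAt_of_le hab (hP.mul hu) hderiv
    ((hP.mul hk).intervalIntegrable_of_Icc hab)]
  simp only [Pi.mul_apply, intervalIntegral.integral_same, exp_zero, one_mul]

theorem hasDerivAt_intervalIntegral_of_continuousOn {F F' : ℝ → ℝ → ℝ} {a b z : ℝ} {U : Set ℝ}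
    (hU : U ∈ 𝓝 z) (hF : ∀ w ∈ U, ContinuousOn (fun t => F t w) (uIcc a b))
    (hF' : ContinuousOn (fun p : ℝ × ℝ => F' p.1 p.2) (uIcc a b ×ˢ U))
    (hderiv : ∀ t ∈ uIcc a b, ∀ w ∈ U, HasDerivAt (F t) (F' t w) w) :
    HasDerivAt (fun w => ∫ t in a..b, F t w) (∫ t in a..b, F' t z) z := by
  obtain ⟨ε, hε, hball⟩ := Metric.nhds_basis_closedBall.mem_iff.1 hU
  obtain ⟨C, hC⟩ := (isCompact_uIcc.prod (isCompact_closedBall z ε)).exists_bound_of_continuousOn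
    (hF'.mono (prod_mono le_rfl hball))
  have hF'z : ContinuousOn (fun t => F' t z) (uIcc a b) :=
    hF'.uncurry_right z (mem_of_mem_nhds hU)
  refine (intervalIntegral.hasDerivAt_integral_of_dominated_loc_of_deriv_le
    (F := fun w t => F t w) (F' := fun w t => F' t w) (bound := fun _ => C)
    (Metric.ball_mem_nhds z hε) ?_
    ((hF z (mem_of_mem_nhds hU)).intervalIntegrable)
    ((hF'z.mono uIoc_subset_uIcc).aestronglyMeasurable measurableSet_uIoc) ?_
    intervalIntegrable_const ?_).2
  · filter_upwards [hU] with w hw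
    exact ((hF w hw).mono uIoc_subset_uIcc).aestronglyMeasurable measurableSet_uIoc
  · exact ae_of_all _ fun t ht w hw =>
      hC (t, w) ⟨uIoc_subset_uIcc ht, Metric.ball_subset_closedBall hw⟩
  · exact ae_of_all _ fun t ht w hw =>
      hderiv t (uIoc_subset_uIcc ht) w (hball (Metric.ball_subset_closedBall hw))

theorem hasDerivAt_sub_div_mul_sin_sq {f : ℝ → ℝ} {f' c w : ℝ} (hf : HasDerivAt f f' w)
    (hw : w ≠ 0) :
    HasDerivAt (fun v => v - c / v * sin (f v) ^ 2)
      (1 + c / w ^ 2 * sin (f w) ^ 2 - 2 * (c / w) * sin (f w) * cos (f w) * f') w := by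
  refine ((hasDerivAt_id w).fun_sub (((hasDerivAt_const w c).fun_div (hasDerivAt_id w) hw).fun_mul
    (hf.sin.fun_pow 2))).congr_deriv ?_
  simp only [id]
  field_simp
  ring

structure IsPruferAngle (q φ : ℝ → ℝ) (z : ℝ) : Prop where
  apply_zero : φ 0 = 0
  hasDerivAt : ∀ x ∈ Icc (0:ℝ) 1, HasDerivAt φ (z - q x / z * sin (φ x) ^ 2) x

namespace IsPruferAngle

variable {q φ : ℝ → ℝ} {z : ℝ}

theorem continuousOn (h : IsPruferAngle q φ z) : ContinuousOn φ (Icc 0 1) :=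
  fun x hx => (h.hasDerivAt x hx).continuousAt.continuousWithinAt

theorem eq_integral (hq : ContinuousOn q (Icc 0 1)) (h : IsPruferAngle q φ z) {b : ℝ}
    (hb : b ∈ Icc (0:ℝ) 1) : φ b = ∫ t in 0..b, (z - q t / z * sin (φ t) ^ 2) := by
  have hsub : uIcc 0 b ⊆ Icc 0 1 := by
    rw [uIcc_of_le hb.1]; exact Icc_subset_Icc_right hb.2
  have hrhs : ContinuousOn (fun t => z - q t / z * sin (φ t) ^ 2) (Icc 0 1) := by
    have := h.continuousOn; fun_prop
  rw [intervalIntegral.integral_eq_sub_of_hasDerivAt (fun t ht => h.hasDerivAt t (hsub ht))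
    ((hrhs.mono hsub).intervalIntegrable), h.apply_zero, sub_zero]

end IsPruferAngle

section PruferVariation

variable {q : ℝ → ℝ} {φ ψ : ℝ → ℝ → ℝ}

theorem prufer_variation_eq_integral (hq : ContinuousOn q (Icc 0 1))
    (hφ : ∀ w > 0, IsPruferAngle q (φ · w) w)
    (hφc : ContinuousOn (fun p : ℝ × ℝ => φ p.1 p.2) (Icc 0 1 ×ˢ Ioi 0))
    (hψc : ContinuousOn (fun p : ℝ × ℝ => ψ p.1 p.2) (Icc 0 1 ×ˢ Ioi 0))
    (hψ : ∀ x ∈ Icc (0:ℝ) 1, ∀ w ∈ Ioi (0:ℝ), HasDerivAt (φ x) (ψ x w) w)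
    {z b : ℝ} (hz : 0 < z) (hb : b ∈ Icc (0:ℝ) 1) :
    ψ b z = ∫ t in 0..b, (1 + q t / z ^ 2 * sin (φ t z) ^ 2
      - 2 * (q t / z) * sin (φ t z) * cos (φ t z) * ψ t z) := by
  have hsub : uIcc 0 b ⊆ Icc 0 1 := by
    rw [uIcc_of_le hb.1]; exact Icc_subset_Icc_right hb.2
  have hF : ∀ w ∈ Ioi (0:ℝ), ContinuousOn (fun t => w - q t / w * sin (φ t w) ^ 2) (uIcc 0 b) :=
    fun w hw => by have := (hφ w hw).continuousOn.mono hsub; have := hq.mono hsub; fun_prop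
  have hF' : ContinuousOn (fun p : ℝ × ℝ => 1 + q p.1 / p.2 ^ 2 * sin (φ p.1 p.2) ^ 2
      - 2 * (q p.1 / p.2) * sin (φ p.1 p.2) * cos (φ p.1 p.2) * ψ p.1 p.2) (uIcc 0 b ×ˢ Ioi 0) := by
    have hS : ∀ p ∈ uIcc 0 b ×ˢ Ioi (0:ℝ), p.2 ≠ 0 := fun p hp => hp.2.ne'
    have hq' : ContinuousOn (fun p : ℝ × ℝ => q p.1) (uIcc 0 b ×ˢ Ioi 0) :=
      hq.comp continuousOn_fst fun p hp => hsub hp.1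
    have hφ' := hφc.mono (prod_mono hsub le_rfl)
    exact (continuousOn_const.add ((hq'.div (continuousOn_snd.pow 2)
      fun p hp => pow_ne_zero 2 (hS p hp)).mul ((continuous_sin.comp_continuousOn hφ').pow 2))).sub
      ((((continuousOn_const.mul (hq'.div continuousOn_snd hS)).mul
        (continuous_sin.comp_continuousOn hφ')).mul (continuous_cos.comp_continuousOn hφ')).mul
        (hψc.mono (prod_mono hsub le_rfl)))
  have hderiv := hasDerivAt_intervalIntegral_of_continuousOn (Ioi_mem_nhds hz) hF hF'
    fun t ht w hw => hasDerivAt_sub_div_mul_sin_sq (hψ t (hsub ht) w hw) (ne_of_gt hw)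
  refine (hψ b hb z hz).unique (hderiv.congr_of_eventuallyEq ?_)
  filter_upwards [Ioi_mem_nhds hz] with w hw using (hφ w hw).eq_integral hq hb

theorem hasDerivAt_prufer_variation_sub (hq : ContinuousOn q (Icc 0 1))
    (hφ : ∀ w > 0, IsPruferAngle q (φ · w) w)
    (hφc : ContinuousOn (fun p : ℝ × ℝ => φ p.1 p.2) (Icc 0 1 ×ˢ Ioi 0))
    (hψc : ContinuousOn (fun p : ℝ × ℝ => ψ p.1 p.2) (Icc 0 1 ×ˢ Ioi 0))
    (hψ : ∀ x ∈ Icc (0:ℝ) 1, ∀ w ∈ Ioi (0:ℝ), HasDerivAt (φ x) (ψ x w) w)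
    {z s : ℝ} (hz : 0 < z) (hs : s ∈ Ioo (0:ℝ) 1) :
    HasDerivAt (fun t => ψ t z - φ t z / z)
      (2 / z * (q s / z * (sin (φ s z) ^ 2 - φ s z * sin (φ s z) * cos (φ s z)))
        - 2 * (q s / z * sin (φ s z) * cos (φ s z)) * (ψ s z - φ s z / z)) s := by
  have hG : ContinuousOn (fun t => 1 + q t / z ^ 2 * sin (φ t z) ^ 2
      - 2 * (q t / z) * sin (φ t z) * cos (φ t z) * ψ t z) (Icc 0 1) := by
    have := (hφ z hz).continuousOn; have := hψc.uncurry_right z hz; fun_prop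
  have hψs := (hG.integral_hasDerivAt_right_of_mem_Ioo hs).congr_of_eventuallyEq
    (eventually_of_mem (Ioo_mem_nhds hs.1 hs.2) fun t ht =>
      prufer_variation_eq_integral hq hφ hφc hψc hψ hz (Ioo_subset_Icc_self ht))
  refine (hψs.sub (((hφ z hz).hasDerivAt s (Ioo_subset_Icc_self hs)).div_const z)).congr_deriv ?_
  field_simp
  ring

theorem prufer_variation_sub_eq_integral (hq : ContinuousOn q (Icc 0 1))
    (hφ : ∀ w > 0, IsPruferAngle q (φ · w) w)
    (hφc : ContinuousOn (fun p : ℝ × ℝ => φ p.1 p.2) (Icc 0 1 ×ˢ Ioi 0))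
    (hψc : ContinuousOn (fun p : ℝ × ℝ => ψ p.1 p.2) (Icc 0 1 ×ˢ Ioi 0))
    (hψ : ∀ x ∈ Icc (0:ℝ) 1, ∀ w ∈ Ioi (0:ℝ), HasDerivAt (φ x) (ψ x w) w)
    {z x : ℝ} (hz : 0 < z) (hx : x ∈ Icc (0:ℝ) 1) :
    exp (∫ t in 0..x, q t / z * sin (φ t z) * cos (φ t z)) ^ 2 * (ψ x z - φ x z / z) =
      2 / z * ∫ t in 0..x, exp (∫ s in 0..t, q s / z * sin (φ s z) * cos (φ s z)) ^ 2 *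
        (q t / z) * (sin (φ t z) ^ 2 - φ t z * sin (φ t z) * cos (φ t z)) := by
  have hsub : Icc 0 x ⊆ Icc 0 1 := Icc_subset_Icc_right hx.2
  have hφz := (hφ z hz).continuousOn.mono hsub
  have hψz := (hψc.uncurry_right z hz).mono hsub
  have hqx := hq.mono hsub
  have hvar := exp_integral_mul_sub_eq_integral_of_hasDerivAt hx.1
    (p := fun t => 2 * (q t / z * sin (φ t z) * cos (φ t z))) (by fun_prop) (by fun_prop)
    (by fun_prop) fun s hs =>
      hasDerivAt_prufer_variation_sub hq hφ hφc hψc hψ hz ⟨hs.1, hs.2.trans_le hx.2⟩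
  have hexp : ∀ t, exp (∫ s in 0..t, 2 * (q s / z * sin (φ s z) * cos (φ s z)))
      = exp (∫ s in 0..t, q s / z * sin (φ s z) * cos (φ s z)) ^ 2 := fun t => by
    rw [intervalIntegral.integral_const_mul, two_mul, exp_add, sq]
  have hu0 : ψ 0 z - φ 0 z / z = 0 := by
    rw [prufer_variation_eq_integral hq hφ hφc hψc hψ hz ⟨le_rfl, zero_le_one⟩,
      (hφ z hz).apply_zero, intervalIntegral.integral_same]
    simp
  rw [← intervalIntegral.integral_const_mul]
  simp only [hexp, hu0, sub_zero] at hvar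
  exact hvar.trans (intervalIntegral.integral_congr fun t _ => by ring)

end PruferVariation

theorem scaled_prufer_angle_deriv_formula_general
    (q : ℝ → ℝ) (hqc : ContinuousOn q (Icc 0 1))
    (φ : ℝ → ℝ → ℝ)
    (hC1 : ContDiffOn ℝ 1 (fun p : ℝ × ℝ => φ p.1 p.2) (Icc 0 1 ×ˢ Ioi 0))
    (hφ0 : ∀ z > (0:ℝ), φ 0 z = 0)
    (hφODE : ∀ z > (0:ℝ), ∀ x ∈ Icc (0:ℝ) 1,
      HasDerivAt (fun x' => φ x' z) (z - q x / z * Real.sin (φ x z) ^ 2) x) :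
    ∀ x ∈ Icc (0:ℝ) 1, ∀ z > (0:ℝ),
      HasDerivAt (fun w => φ x w / w)
        (2 / (z ^ 2 *
            (Real.exp (∫ t in (0:ℝ)..x, q t / z * Real.sin (φ t z) * Real.cos (φ t z))) ^ 2) *
          ∫ t in (0:ℝ)..x,
            (Real.exp (∫ s in (0:ℝ)..t, q s / z * Real.sin (φ s z) * Real.cos (φ s z))) ^ 2 *
              (q t / z) *
              (Real.sin (φ t z) ^ 2 - φ t z * Real.sin (φ t z) * Real.cos (φ t z)))
        z := by
  intro x hx z hz
  obtain ⟨ψ, hψc, hψ⟩ :=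
    hC1.exists_continuousOn_hasDerivAt_snd (uniqueDiffOn_Icc zero_lt_one) isOpen_Ioi
  have hvar := prufer_variation_sub_eq_integral hqc (fun w hw => ⟨hφ0 w hw, hφODE w hw⟩)
    hC1.continuousOn hψc hψ hz hx
  refine ((hψ x hx z hz).div (hasDerivAt_id z) hz.ne').congr_deriv ?_
  have hE := (exp_pos (∫ t in (0:ℝ)..x, q t / z * sin (φ t z) * cos (φ t z))).ne'
  have hz0 : z ≠ 0 := hz.ne'
  simp only [id]
  field_simp at hvar ⊢
  linear_combination hvar

/-- Formula for the derivative in z of the scaled Prüfer angle θ(x,z) = φ(x,z)/z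
(Corollary 3.3 of Horváth–Kiss). Here r(x,z) = exp(∫₀ˣ (q/z)·sinφ·cosφ). -/
theorem scaled_prufer_angle_deriv_formula
    (q : ℝ → ℝ) (hqc : ContinuousOn q (Icc 0 1))
    (hqnonneg : ∀ x ∈ Icc (0:ℝ) 1, 0 ≤ q x)
    (φ : ℝ → ℝ → ℝ)
    (hC1 : ContDiffOn ℝ 1 (fun p : ℝ × ℝ => φ p.1 p.2) (Icc 0 1 ×ˢ Ioi 0))
    (hφ0 : ∀ z > (0:ℝ), φ 0 z = 0)
    (hφODE : ∀ z > (0:ℝ), ∀ x ∈ Icc (0:ℝ) 1,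
      HasDerivAt (fun x' => φ x' z) (z - q x / z * Real.sin (φ x z) ^ 2) x) :
    ∀ x ∈ Icc (0:ℝ) 1, ∀ z > (0:ℝ),
      HasDerivAt (fun w => φ x w / w)
        (2 / (z ^ 2 *
            (Real.exp (∫ t in (0:ℝ)..x, q t / z * Real.sin (φ t z) * Real.cos (φ t z))) ^ 2) *
          ∫ t in (0:ℝ)..x,
            (Real.exp (∫ s in (0:ℝ)..t, q s / z * Real.sin (φ s z) * Real.cos (φ s z))) ^ 2 *
              (q t / z) *
              (Real.sin (φ t z) ^ 2 - φ t z * Real.sin (φ t z) * Real.cos (φ t z)))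
        z :=
  scaled_prufer_angle_deriv_formula_general q hqc φ hC1 hφ0 hφODE
end

section
/- Let x₀ > 0, let q : [0,x₀] → ℝ be nonnegative, differentiable and monotone increasing, and let z > 0 satisfy z² > q(x₀). Let φ be the Prüfer angle of q at z, let i ≥ 0 be an integer, D ∈ [π/2, π], and let a ≤ b in (0,x₀] satisfy φ(a) = iπ + π/2 and φ(b) = iπ + π/2 + D; let ψ denote the inverse of φ restricted to [a,b] and set Q(t) = q(ψ(t + (i+1)π))/z². Then there exists c₁ ∈ (iπ + π/2, iπ + π/2 + D) such that −(i+1)π·∫_{−π/2}^{−π/2+D} Q(t)·sin t·cos t/(1 − Q(t)·sin²t) dt ≥ −((i+1)π²/(2z²)) · (1/(1 − q(ψ(c₁))/z²)) · q'(ψ(c₁))/φ'(ψ(c₁)). -/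
/-!
Write `Q s = q (ψ s) / z²`; it is increasing, since `q` and `ψ` are. The shift `s = t + (i + 1)π`
turns the integral into `∫_{φ a}^{φ b} Q sin cos / (1 - Q sin²)`, and this integrand equals
`F' - Q' sin² / (2 (1 - Q sin²)) ≤ F'` for `F = -½ log (1 - Q sin²)`. As `sin² (φ a) = 1` and
`sin² ≤ 1`, the increment of `F` is at most that of `G = -½ log (1 - Q)`, which the mean value
theorem writes as `D · Q'(c) / (2 (1 - Q c))` with `D ≤ π`; finally `Q' = (q' ∘ ψ) / (z² · φ' ∘ ψ)`.
-/

open Real Set Filter Topology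

section RightInverse

variable {α β : Type*} [LinearOrder α] [LinearOrder β] {f : α → β} {g : β → α} {a b : α}

theorem StrictMonoOn.continuousOn_of_surjOn_Icc [TopologicalSpace α] [OrderTopology α]
    [TopologicalSpace β] [OrderTopology β] {c d : β}
    (hf : StrictMonoOn f (Icc a b)) (hmaps : MapsTo f (Icc a b) (Icc c d))
    (hsurj : SurjOn f (Icc a b) (Icc c d)) : ContinuousOn f (Icc a b) := by
  let e : Icc a b ≃o Icc c d := StrictMono.orderIsoOfSurjective (hmaps.restrict f _ _)
    (fun x y hxy => hf x.2 y.2 hxy)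
    (fun y => let ⟨x, hx, hxy⟩ := hsurj y.2; ⟨⟨x, hx⟩, Subtype.ext hxy⟩)
  rw [continuousOn_iff_continuous_domRestrict]
  exact continuous_subtype_val.comp e.continuous

theorem MonotoneOn.strictMonoOn_of_rightInvOn (hf : MonotoneOn f (Icc a b))
    (hg : MapsTo g (Icc (f a) (f b)) (Icc a b)) (hfg : RightInvOn g f (Icc (f a) (f b))) :
    StrictMonoOn g (Icc (f a) (f b)) := by
  intro s hs t ht hst
  by_contra! h
  have := hf (hg ht) (hg hs) h
  rw [hfg hs, hfg ht] at this
  exact this.not_gt hst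

theorem StrictMonoOn.surjOn_of_rightInvOn (hf : StrictMonoOn f (Icc a b))
    (hg : MapsTo g (Icc (f a) (f b)) (Icc a b)) (hfg : RightInvOn g f (Icc (f a) (f b))) :
    SurjOn g (Icc (f a) (f b)) (Icc a b) := by
  intro x hx
  have hfx : f x ∈ Icc (f a) (f b) :=
    ⟨hf.monotoneOn (left_mem_Icc.2 (hx.1.trans hx.2)) hx hx.1,
      hf.monotoneOn hx (right_mem_Icc.2 (hx.1.trans hx.2)) hx.2⟩
  exact ⟨f x, hfx, hf.injOn (hg hfx) hx (hfg hfx)⟩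

theorem StrictMonoOn.continuousOn_of_rightInvOn [TopologicalSpace α] [OrderTopology α]
    [TopologicalSpace β] [OrderTopology β] (hf : StrictMonoOn f (Icc a b))
    (hg : MapsTo g (Icc (f a) (f b)) (Icc a b)) (hfg : RightInvOn g f (Icc (f a) (f b))) :
    ContinuousOn g (Icc (f a) (f b)) :=
  (hf.monotoneOn.strictMonoOn_of_rightInvOn hg hfg).continuousOn_of_surjOn_Icc hg
    (hf.surjOn_of_rightInvOn hg hfg)

end RightInverse

theorem StrictMonoOn.hasDerivAt_of_rightInvOn {f g : ℝ → ℝ} {a b f' t : ℝ}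
    (hf : StrictMonoOn f (Icc a b)) (hg : MapsTo g (Icc (f a) (f b)) (Icc a b))
    (hfg : RightInvOn g f (Icc (f a) (f b))) (ht : t ∈ Ioo (f a) (f b))
    (hderiv : HasDerivAt f f' (g t)) (hf' : f' ≠ 0) : HasDerivAt g f'⁻¹ t :=
  have hnhds : Icc (f a) (f b) ∈ 𝓝 t := Icc_mem_nhds ht.1 ht.2
  hderiv.of_local_left_inverse ((hf.continuousOn_of_rightInvOn hg hfg).continuousAt hnhds) hf'
    (eventually_of_mem hnhds hfg)

theorem StrictMonoOn.hasDerivAt_comp_rightInvOn {f g h f' h' : ℝ → ℝ} {a b t : ℝ}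
    (hf : StrictMonoOn f (Icc a b)) (hg : MapsTo g (Icc (f a) (f b)) (Icc a b))
    (hfg : RightInvOn g f (Icc (f a) (f b))) (ht : t ∈ Ioo (f a) (f b))
    (hfd : ∀ x ∈ Icc a b, HasDerivAt f (f' x) x) (hf' : ∀ x ∈ Icc a b, f' x ≠ 0)
    (hhd : ∀ x ∈ Icc a b, HasDerivAt h (h' x) x) :
    HasDerivAt (h ∘ g) (h' (g t) / f' (g t)) t := by
  have hgt : g t ∈ Icc a b := hg (Ioo_subset_Icc_self ht)
  simpa only [div_eq_mul_inv] using
    (hhd _ hgt).comp t (hf.hasDerivAt_of_rightInvOn hg hfg ht (hfd _ hgt) (hf' _ hgt))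

noncomputable def crossIntegrand (Q : ℝ → ℝ) (t : ℝ) : ℝ :=
  Q t * sin t * cos t / (1 - Q t * sin t ^ 2)

theorem crossIntegrand_add_nat_mul_pi (Q : ℝ → ℝ) (n : ℕ) (t : ℝ) :
    crossIntegrand Q (t + n * π) = crossIntegrand (fun s => Q (s + n * π)) t := by
  have h : ((-1 : ℝ) ^ n) ^ 2 = 1 := by rw [← pow_mul, mul_comm, pow_mul, neg_one_sq, one_pow]
  simp only [crossIntegrand, sin_add_nat_mul_pi, cos_add_nat_mul_pi]
  congr 1
  · linear_combination Q (t + n * π) * sin t * cos t * h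
  · linear_combination -(Q (t + n * π) * sin t ^ 2) * h

theorem integral_crossIntegrand_comp_add_nat_mul_pi (Q : ℝ → ℝ) (n : ℕ) (A B : ℝ) :
    ∫ t in A..B, crossIntegrand (fun s => Q (s + n * π)) t =
      ∫ s in (A + n * π)..(B + n * π), crossIntegrand Q s := by
  simp_rw [← crossIntegrand_add_nat_mul_pi]
  exact intervalIntegral.integral_comp_add_right _ _

section CrossTerm

variable {Q Q' : ℝ → ℝ} {lo hi : ℝ}

theorem one_sub_mul_sin_sq_pos {p : ℝ} (hp : p < 1) (θ : ℝ) : 0 < 1 - p * sin θ ^ 2 := by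
  rcases le_total 0 p with hp0 | hp0
  · nlinarith [mul_le_mul_of_nonneg_left (sin_sq_le_one θ) hp0]
  · nlinarith [mul_nonpos_of_nonpos_of_nonneg hp0 (sq_nonneg (sin θ))]

theorem integral_crossIntegrand_le (hlohi : lo ≤ hi) (hcos : cos lo = 0)
    (hQc : ContinuousOn Q (Icc lo hi)) (hQd : ∀ t ∈ Ioo lo hi, HasDerivAt Q (Q' t) t)
    (hQ' : ∀ t ∈ Ioo lo hi, 0 ≤ Q' t) (hQ1 : ∀ t ∈ Icc lo hi, Q t < 1) (hQhi : 0 ≤ Q hi) :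
    ∫ t in lo..hi, crossIntegrand Q t ≤ -log (1 - Q hi) / 2 + log (1 - Q lo) / 2 := by
  set F : ℝ → ℝ := fun t => -log (1 - Q t * sin t ^ 2) / 2
  have hden : ∀ t ∈ Icc lo hi, 1 - Q t * sin t ^ 2 ≠ 0 :=
    fun t ht => (one_sub_mul_sin_sq_pos (hQ1 t ht) t).ne'
  have hdenc : ContinuousOn (fun t => 1 - Q t * sin t ^ 2) (Icc lo hi) := by fun_prop
  have hFd : ∀ t ∈ Ioo lo hi, HasDerivAt F
      ((Q' t * sin t ^ 2 + Q t * (2 * sin t * cos t)) / (1 - Q t * sin t ^ 2) / 2) t := by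
    intro t ht
    have hsin : HasDerivAt (fun s => sin s ^ 2) (2 * sin t * cos t) t := by
      simpa using (hasDerivAt_sin t).fun_pow 2
    refine (((((hQd t ht).fun_mul hsin).const_sub 1).log
      (hden t (Ioo_subset_Icc_self ht))).fun_neg.div_const 2).congr_deriv ?_
    ring
  have hF : ∫ t in lo..hi, crossIntegrand Q t ≤ F hi - F lo := by
    refine intervalIntegral.integral_le_sub_of_hasDeriv_right_of_le hlohi
      ((hdenc.log hden).neg.div_const 2) (fun t ht => (hFd t ht).hasDerivWithinAt)
      (ContinuousOn.integrableOn_Icc ?_) fun t ht => ?_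
    · exact ((hQc.mul continuous_sin.continuousOn).mul continuous_cos.continuousOn).div hdenc hden
    · have hpos := one_sub_mul_sin_sq_pos (hQ1 t (Ioo_subset_Icc_self ht)) t
      rw [crossIntegrand, div_div, div_le_div_iff₀ hpos (by positivity)]
      nlinarith [mul_nonneg (mul_nonneg (hQ' t ht) (sq_nonneg (sin t))) hpos.le]
  have hFlo : F lo = -log (1 - Q lo) / 2 := by
    simp only [F, sin_sq, hcos]
    norm_num
  have hFhi : F hi ≤ -log (1 - Q hi) / 2 := by
    have h1 : 0 < 1 - Q hi := sub_pos.2 (hQ1 hi (right_mem_Icc.2 hlohi))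
    have h2 : 1 - Q hi ≤ 1 - Q hi * sin hi ^ 2 := by nlinarith [sin_sq_le_one hi]
    have := log_le_log h1 h2
    simp only [F]
    linarith
  linarith

theorem exists_integral_crossIntegrand_le {L : ℝ} (hlohi : lo < hi) (hL : hi - lo ≤ L)
    (hcos : cos lo = 0) (hQc : ContinuousOn Q (Icc lo hi))
    (hQd : ∀ t ∈ Ioo lo hi, HasDerivAt Q (Q' t) t)
    (hQ' : ∀ t ∈ Ioo lo hi, 0 ≤ Q' t) (hQ1 : ∀ t ∈ Icc lo hi, Q t < 1) (hQhi : 0 ≤ Q hi) :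
    ∃ c ∈ Ioo lo hi, ∫ t in lo..hi, crossIntegrand Q t ≤ L * (Q' c / (1 - Q c) / 2) := by
  have hpos : ∀ t ∈ Icc lo hi, 0 < 1 - Q t := fun t ht => sub_pos.2 (hQ1 t ht)
  obtain ⟨c, hc, hslope⟩ := exists_hasDerivAt_eq_slope (fun t => -log (1 - Q t) / 2)
    (fun t => Q' t / (1 - Q t) / 2) hlohi
    (((continuousOn_const.sub hQc).log fun t ht => (hpos t ht).ne').neg.div_const 2)
    (fun t ht => by
      refine ((((hQd t ht).const_sub 1).log (hpos t (Ioo_subset_Icc_self ht)).ne').fun_neg.div_const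
        2).congr_deriv ?_
      field_simp)
  refine ⟨c, hc, ?_⟩
  have hG'c : 0 ≤ Q' c / (1 - Q c) / 2 :=
    div_nonneg (div_nonneg (hQ' c hc) (hpos c (Ioo_subset_Icc_self hc)).le) zero_le_two
  calc ∫ t in lo..hi, crossIntegrand Q t
      ≤ -log (1 - Q hi) / 2 + log (1 - Q lo) / 2 :=
        integral_crossIntegrand_le hlohi.le hcos hQc hQd hQ' hQ1 hQhi
    _ = (hi - lo) * (Q' c / (1 - Q c) / 2) := by
        rw [hslope]; field_simp [(sub_pos.2 hlohi).ne']; ring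
    _ ≤ L * (Q' c / (1 - Q c) / 2) := mul_le_mul_of_nonneg_right hL hG'c

end CrossTerm

theorem prufer_slope_pos {z p : ℝ} (hz : 0 < z) (hp : 0 ≤ p) (hpz : p < z ^ 2) (θ : ℝ) :
    0 < z - p / z * sin θ ^ 2 := by
  have hpz' : p / z < z := by rw [div_lt_iff₀ hz]; nlinarith
  nlinarith [mul_le_of_le_one_right (div_nonneg hp hz.le) (sin_sq_le_one θ)]

theorem strictMonoOn_of_prufer {q φ : ℝ → ℝ} {z a b : ℝ} (hz : 0 < z)
    (hq : ∀ x ∈ Icc a b, 0 ≤ q x ∧ q x < z ^ 2)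
    (hφ : ∀ x ∈ Icc a b, HasDerivAt φ (z - q x / z * sin (φ x) ^ 2) x) :
    StrictMonoOn φ (Icc a b) :=
  strictMonoOn_of_hasDerivWithinAt_pos (convex_Icc a b)
    (fun x hx => (hφ x hx).continuousAt.continuousWithinAt)
    (fun x hx => (hφ x (interior_subset hx)).hasDerivWithinAt)
    (fun x hx => prufer_slope_pos hz (hq x (interior_subset hx)).1 (hq x (interior_subset hx)).2 _)

theorem exists_integral_crossIntegrand_comp_rightInvOn_le {q q' φ ψ : ℝ → ℝ} {z a b L : ℝ}
    (hz : 0 < z) (hq : ∀ x ∈ Icc a b, 0 ≤ q x ∧ q x < z ^ 2)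
    (hqd : ∀ x ∈ Icc a b, HasDerivAt q (q' x) x) (hq' : ∀ x ∈ Icc a b, 0 ≤ q' x)
    (hφ : ∀ x ∈ Icc a b, HasDerivAt φ (z - q x / z * sin (φ x) ^ 2) x)
    (hψ : MapsTo ψ (Icc (φ a) (φ b)) (Icc a b)) (hψφ : RightInvOn ψ φ (Icc (φ a) (φ b)))
    (hφab : φ a < φ b) (hL : φ b - φ a ≤ L) (hcos : cos (φ a) = 0) :
    ∃ c ∈ Ioo (φ a) (φ b), ∫ t in φ a..φ b, crossIntegrand (fun s => q (ψ s) / z ^ 2) t ≤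
      L * (q' (ψ c) / (z - q (ψ c) / z * sin (φ (ψ c)) ^ 2) / z ^ 2 / (1 - q (ψ c) / z ^ 2) / 2) := by
  have hφmono : StrictMonoOn φ (Icc a b) := strictMonoOn_of_prufer hz hq hφ
  have hslope : ∀ x ∈ Icc a b, 0 < z - q x / z * sin (φ x) ^ 2 :=
    fun x hx => prufer_slope_pos hz (hq x hx).1 (hq x hx).2 _
  have hqc : ContinuousOn q (Icc a b) := fun x hx => (hqd x hx).continuousAt.continuousWithinAt
  refine exists_integral_crossIntegrand_le hφab hL hcos
    ((hqc.comp (hφmono.continuousOn_of_rightInvOn hψ hψφ) hψ).div_const _)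
    (fun t ht => ((hφmono.hasDerivAt_comp_rightInvOn hψ hψφ ht hφ (fun x hx => (hslope x hx).ne')
      hqd).div_const _))
    (fun t ht => ?_) (fun t ht => (div_lt_one (by positivity)).2 (hq _ (hψ ht)).2)
    (div_nonneg (hq _ (hψ (right_mem_Icc.2 hφab.le))).1 (sq_nonneg z))
  have hψt := hψ (Ioo_subset_Icc_self ht)
  exact div_nonneg (div_nonneg (hq' _ hψt) (hslope _ hψt).le) (sq_nonneg z)

theorem cross_term_lower_bound_general
    (x₀ : ℝ) (hx₀ : 0 < x₀)
    (q q' : ℝ → ℝ)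
    (hqnonneg : ∀ x ∈ Icc 0 x₀, 0 ≤ q x)
    (hqdiff : ∀ x ∈ Icc 0 x₀, HasDerivAt q (q' x) x)
    (hmono : MonotoneOn q (Icc 0 x₀))
    (z : ℝ) (hz : 0 < z) (hsup : q x₀ < z ^ 2)
    (φ : ℝ → ℝ)
    (hφODE : ∀ x ∈ Icc 0 x₀, HasDerivAt φ (z - q x / z * Real.sin (φ x) ^ 2) x)
    (i : ℕ) (D : ℝ) (hD : D ∈ Icc (π / 2) π)
    (a b : ℝ) (ha : a ∈ Ioc 0 x₀) (hb : b ∈ Ioc 0 x₀)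
    (hφa : φ a = i * π + π / 2) (hφb : φ b = i * π + π / 2 + D)
    (ψ : ℝ → ℝ)
    (hψ : ∀ t ∈ Icc (φ a) (φ b), ψ t ∈ Icc a b ∧ φ (ψ t) = t) :
    ∃ c₁ ∈ Ioo ((i : ℝ) * π + π / 2) ((i : ℝ) * π + π / 2 + D),
      -(((i : ℝ) + 1) * π) *
          (∫ t in (-(π / 2))..(-(π / 2) + D),
            (q (ψ (t + ((i : ℝ) + 1) * π)) / z ^ 2) * Real.sin t * Real.cos t /
              (1 - (q (ψ (t + ((i : ℝ) + 1) * π)) / z ^ 2) * Real.sin t ^ 2)) ≥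
        -(((i : ℝ) + 1) * π ^ 2 / (2 * z ^ 2)) *
          (1 / (1 - q (ψ c₁) / z ^ 2)) *
          (q' (ψ c₁) / (z - q (ψ c₁) / z * Real.sin (φ (ψ c₁)) ^ 2)) := by
  have hsub : Icc a b ⊆ Icc 0 x₀ := Icc_subset_Icc ha.1.le hb.2
  have hq : ∀ x ∈ Icc a b, 0 ≤ q x ∧ q x < z ^ 2 := fun x hx =>
    ⟨hqnonneg x (hsub hx), (hmono (hsub hx) ⟨hx₀.le, le_rfl⟩ (hsub hx).2).trans_lt hsup⟩
  have hq' : ∀ x ∈ Icc a b, 0 ≤ q' x := fun x hx =>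
    (hqdiff x (hsub hx)).hasDerivWithinAt.nonneg_of_monotoneOn
      (uniqueDiffOn_Icc hx₀ _ (hsub hx)).accPt hmono
  have hφab : φ a < φ b := by rw [hφa, hφb]; linarith [hD.1, pi_pos]
  have hcos : cos (φ a) = 0 := by rw [hφa, cos_add_pi_div_two, sin_nat_mul_pi, neg_zero]
  obtain ⟨c, hc, hint⟩ := exists_integral_crossIntegrand_comp_rightInvOn_le (L := π) hz hq
    (fun x hx => hqdiff x (hsub hx)) hq' (fun x hx => hφODE x (hsub hx))
    (fun t ht => (hψ t ht).1) (fun t ht => (hψ t ht).2) hφab (by linarith [hD.2]) hcos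
  have hshift : ∫ t in (-(π / 2))..(-(π / 2) + D),
      crossIntegrand (fun s => q (ψ (s + (i + 1) * π)) / z ^ 2) t =
      ∫ t in φ a..φ b, crossIntegrand (fun s => q (ψ s) / z ^ 2) t := by
    rw [hφa, hφb]
    convert integral_crossIntegrand_comp_add_nat_mul_pi _ (i + 1) _ _ using 2 <;> push_cast <;> ring
  rw [hφa, hφb] at hc
  refine ⟨c, hc, ?_⟩
  change -(((i : ℝ) + 1) * π) * ∫ t in (-(π / 2))..(-(π / 2) + D),
    crossIntegrand (fun s => q (ψ (s + (i + 1) * π)) / z ^ 2) t ≥ _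
  rw [hshift]
  exact le_trans (le_of_eq (by ring)) (mul_le_mul_of_nonpos_left hint (by nlinarith [pi_pos]))

/-- Lemma 3.4 iii): lower bound for the cross term via the mean value theorem;
here φ'(ψ(c₁)) = z − q(ψ(c₁))/z·sin²(φ(ψ(c₁))) by the Prüfer ODE. -/
theorem cross_term_lower_bound
    (x₀ : ℝ) (hx₀ : 0 < x₀)
    (q q' : ℝ → ℝ)
    (hqnonneg : ∀ x ∈ Icc 0 x₀, 0 ≤ q x)
    (hqdiff : ∀ x ∈ Icc 0 x₀, HasDerivAt q (q' x) x)
    (hmono : MonotoneOn q (Icc 0 x₀))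
    (z : ℝ) (hz : 0 < z) (hsup : q x₀ < z ^ 2)
    (φ : ℝ → ℝ) (hφ0 : φ 0 = 0)
    (hφODE : ∀ x ∈ Icc 0 x₀, HasDerivAt φ (z - q x / z * Real.sin (φ x) ^ 2) x)
    (i : ℕ) (D : ℝ) (hD : D ∈ Icc (π / 2) π)
    (a b : ℝ) (ha : a ∈ Ioc 0 x₀) (hb : b ∈ Ioc 0 x₀) (hab : a ≤ b)
    (hφa : φ a = i * π + π / 2) (hφb : φ b = i * π + π / 2 + D)
    (ψ : ℝ → ℝ)
    (hψ : ∀ t ∈ Icc (φ a) (φ b), ψ t ∈ Icc a b ∧ φ (ψ t) = t) :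
    ∃ c₁ ∈ Ioo ((i : ℝ) * π + π / 2) ((i : ℝ) * π + π / 2 + D),
      -(((i : ℝ) + 1) * π) *
          (∫ t in (-(π / 2))..(-(π / 2) + D),
            (q (ψ (t + ((i : ℝ) + 1) * π)) / z ^ 2) * Real.sin t * Real.cos t /
              (1 - (q (ψ (t + ((i : ℝ) + 1) * π)) / z ^ 2) * Real.sin t ^ 2)) ≥
        -(((i : ℝ) + 1) * π ^ 2 / (2 * z ^ 2)) *
          (1 / (1 - q (ψ c₁) / z ^ 2)) *
          (q' (ψ c₁) / (z - q (ψ c₁) / z * Real.sin (φ (ψ c₁)) ^ 2)) :=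
  cross_term_lower_bound_general x₀ hx₀ q q' hqnonneg hqdiff hmono z hz hsup φ hφODE i D hD a b ha
    hb hφa hφb ψ hψ
end
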